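/- arXiv:2108.08642 — 2 statements merged into one kernel-verified Lean document; each statement's English description precedes it below -/
import Mathlib

section
/- Let D be a finite digit set, G a group with identity e, W : D × D → G a spin map, s the level-M supertile spin function defined by s(d, []) = e and s(d, i :: w) = W(d, i)·s(i, w), and χ : G → ℂˣ a group homomorphism. Suppose the spin data is χ-unitary, i.e. for all i ≠ j in D, Σ_{d∈D} χ(W(d,i))·conj(χ(W(d,j))) = 0. Then for every M ≥ 1 and all words u = (i_{M-1}, …, i_0) and v = (j_{M-1}, …, j_0) in D^M whose leading digits differ (i_{M-1} ≠ j_{M-1}), one has Σ_{d∈D} χ(s(d,u))·conj(χ(s(d,v))) = 0. That is, the M-th power of a χ-unitary spin substitution is again χ-unitary. -/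
/-- The level-`M` supertile spin function `s : D → List D → G`, defined recursively by
`s(d, []) = e` and `s(d, i :: w) = W(d, i) · s(i, w)`. -/
def supertileSpin {D G : Type*} [Group G] (W : D → D → G) : D → List D → G
  | _, [] => 1
  | d, i :: w => W d i * supertileSpin W i w

theorem sum_supertileSpin_cons_mul_star {D G R : Type*} [Fintype D] [Group G]
    [CommSemiring R] [StarRing R] (W : D → D → G) (χ : G →* Rˣ) (i j : D) (u v : List D) :
    ∑ d : D, (χ (supertileSpin W d (i :: u)) : R) *
        starRingEnd R (χ (supertileSpin W d (j :: v)) : R) =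
      (∑ d : D, (χ (W d i) : R) * starRingEnd R (χ (W d j) : R)) *
        ((χ (supertileSpin W i u) : R) * starRingEnd R (χ (supertileSpin W j v) : R)) := by
  simp only [supertileSpin, map_mul, Units.val_mul, Finset.sum_mul]
  exact Finset.sum_congr rfl fun d _ => by ring

/-- If the spin data `(D, G, W)` is `χ`-unitary, i.e.
`∑_{d ∈ D} χ(W(d,i)) · conj(χ(W(d,j))) = 0` for all `i ≠ j`, then the `M`-th power of the
spin substitution is again `χ`-unitary: for all words `u = (i_{M-1}, …, i_0)` and
`v = (j_{M-1}, …, j_0)` of length `M ≥ 1` whose leading digits differ,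
`∑_{d ∈ D} χ(s(d,u)) · conj(χ(s(d,v))) = 0`. -/
theorem supertileSpin_chiUnitary {D G : Type*} [Fintype D] [Group G]
    (W : D → D → G) (χ : G →* ℂˣ)
    (hW : ∀ i j : D, i ≠ j →
      ∑ d : D, (χ (W d i) : ℂ) * (starRingEnd ℂ) (χ (W d j) : ℂ) = 0) :
    ∀ (M : ℕ), 1 ≤ M → ∀ (u v : List D), u.length = M → v.length = M →
      ∀ (i j : D), i ≠ j → u.head? = some i → v.head? = some j →
        ∑ d : D, (χ (supertileSpin W d u) : ℂ) *
          (starRingEnd ℂ) (χ (supertileSpin W d v) : ℂ) = 0 := by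
  intro M _ u v _ _ i j hij hu hv
  obtain ⟨u, rfl⟩ := List.head?_eq_some_iff.mp hu
  obtain ⟨v, rfl⟩ := List.head?_eq_some_iff.mp hv
  rw [sum_supertileSpin_cons_mul_star, hW i j hij, zero_mul]
end

section
/- Let A be an m × m complex matrix and B an n × n complex matrix (m, n ≥ 1), such that every entry of A and every entry of B has modulus 1. Then (1/√(mn))·(A ⊗ B) is a unitary matrix if and only if both (1/√m)·A and (1/√n)·B are unitary matrices. -/
open Matrix
open scoped Kronecker

/-! With `U = A/√m` and `V = B/√n`, the product is unitary iff `(U Uᴴ) ⊗ (V Vᴴ) = 1`.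
Entries of modulus one make every row of `U` and of `V` a unit vector, so `V Vᴴ` and `U Uᴴ`
have a diagonal entry equal to `1`; comparing the entries of `(U Uᴴ) ⊗ (V Vᴴ) = 1` along that
diagonal entry of one factor then gives that the other factor is `1`. -/

namespace Matrix

variable {R m n : Type*}

theorem eq_one_of_kronecker_eq_one_of_apply_self_eq_one_right [MulZeroOneClass R]
    [DecidableEq m] [DecidableEq n] {P : Matrix m m R} {Q : Matrix n n R}
    (h : P ⊗ₖ Q = 1) {l : n} (hQ : Q l l = 1) : P = 1 := by
  ext i j
  simpa [kronecker_apply, hQ, one_apply] using congr_fun₂ h (i, l) (j, l)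

theorem eq_one_of_kronecker_eq_one_of_apply_self_eq_one_left [MulZeroOneClass R]
    [DecidableEq m] [DecidableEq n] {P : Matrix m m R} {Q : Matrix n n R}
    (h : P ⊗ₖ Q = 1) {i : m} (hP : P i i = 1) : Q = 1 := by
  ext k l
  simpa [kronecker_apply, hP, one_apply] using congr_fun₂ h (i, k) (i, l)

theorem mul_conjTranspose_self_apply_self_of_norm_eq_one {𝕜 : Type*} [RCLike 𝕜] [Fintype n]
    (A : Matrix m n 𝕜) (hA : ∀ i j, ‖A i j‖ = 1) (i : m) :
    (A * Aᴴ) i i = Fintype.card n := by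
  simp [mul_apply, RCLike.mul_conj, hA]

theorem inv_sqrt_card_smul_mul_conjTranspose_self_apply_self [Fintype n] [Nonempty n]
    (A : Matrix m n ℂ) (hA : ∀ i j, ‖A i j‖ = 1) (i : m) :
    ((((Real.sqrt (Fintype.card n) : ℂ))⁻¹ • A) *
      (((Real.sqrt (Fintype.card n) : ℂ))⁻¹ • A)ᴴ) i i = 1 := by
  rw [conjTranspose_smul, Matrix.smul_mul, Matrix.mul_smul, smul_apply, smul_apply,
    mul_conjTranspose_self_apply_self_of_norm_eq_one A hA]
  have hcard : (0 : ℝ) < Fintype.card n := by exact_mod_cast Fintype.card_pos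
  rw [star_inv₀, Complex.star_def, Complex.conj_ofReal, smul_eq_mul, smul_eq_mul, ← mul_assoc,
    ← mul_inv, ← Complex.ofReal_mul, Real.mul_self_sqrt hcard.le, ← Complex.ofReal_natCast,
    inv_mul_cancel₀ (by exact_mod_cast hcard.ne')]

theorem inv_sqrt_mul_smul_kronecker {a b : ℝ} (ha : 0 ≤ a) (A : Matrix m m ℂ) (B : Matrix n n ℂ) :
    ((Real.sqrt (a * b) : ℂ))⁻¹ • (A ⊗ₖ B) =
      (((Real.sqrt a : ℂ))⁻¹ • A) ⊗ₖ (((Real.sqrt b : ℂ))⁻¹ • B) := by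
  rw [smul_kronecker, kronecker_smul, smul_smul, Real.sqrt_mul ha, Complex.ofReal_mul, mul_inv]

end Matrix

/-- For square complex matrices `A` (of size `m`) and `B` (of size `n`) with all entries of
modulus 1, `(1/√(mn))·(A ⊗ B)` is unitary if and only if both `(1/√m)·A` and `(1/√n)·B`
are unitary. -/
theorem kronecker_unitary_iff {m n : ℕ} (hm : 1 ≤ m) (hn : 1 ≤ n)
    (A : Matrix (Fin m) (Fin m) ℂ) (B : Matrix (Fin n) (Fin n) ℂ)
    (hA : ∀ i j, ‖A i j‖ = 1) (hB : ∀ i j, ‖B i j‖ = 1) :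
    ((Real.sqrt (m * n) : ℂ))⁻¹ • (A ⊗ₖ B) ∈ Matrix.unitaryGroup (Fin m × Fin n) ℂ ↔
      (((Real.sqrt m : ℂ))⁻¹ • A ∈ Matrix.unitaryGroup (Fin m) ℂ ∧
       ((Real.sqrt n : ℂ))⁻¹ • B ∈ Matrix.unitaryGroup (Fin n) ℂ) := by
  rw [inv_sqrt_mul_smul_kronecker (Nat.cast_nonneg m)]
  refine ⟨fun h => ?_, fun ⟨hU, hV⟩ => kronecker_mem_unitary hU hV⟩
  have : Nonempty (Fin m) := ⟨⟨0, hm⟩⟩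
  have : Nonempty (Fin n) := ⟨⟨0, hn⟩⟩
  rw [mem_unitaryGroup_iff, star_eq_conjTranspose, conjTranspose_kronecker,
    ← mul_kronecker_mul] at h
  have hU := inv_sqrt_card_smul_mul_conjTranspose_self_apply_self A hA ⟨0, hm⟩
  have hV := inv_sqrt_card_smul_mul_conjTranspose_self_apply_self B hB ⟨0, hn⟩
  simp only [Fintype.card_fin] at hU hV
  simp only [mem_unitaryGroup_iff, star_eq_conjTranspose]
  exact ⟨eq_one_of_kronecker_eq_one_of_apply_self_eq_one_right h hV,
    eq_one_of_kronecker_eq_one_of_apply_self_eq_one_left h hU⟩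
end
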